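/- Let X be a real Hilbert space, E : X → ℝ Fréchet differentiable with gradient ∇E, and B : X → X a continuous self-adjoint linear operator. Let Φ : ℝ^P → X be differentiable at θ ∈ ℝ^P with BΦ(θ) ≠ 0 and ⟨BΦ(θ), ∂_{θ_i}Φ(θ)⟩ = 0 for all i (tangency of the parameterized family to the constraint). Set n = BΦ(θ), grad = ∇E(Φ(θ)) − (⟨∇E(Φ(θ)), n⟩/‖n‖²) n, G_{ij} = ⟨∂_{θ_i}Φ(θ), ∂_{θ_j}Φ(θ)⟩, and L = E ∘ Φ. Then: (i) ⟨grad, ∂_{θ_j}Φ(θ)⟩ = ∂_{θ_j} L(θ) for every j; and (ii) for every v ∈ ℝ^P, the Galerkin (Dirac–Frenkel) conditions ⟨ Σ_{i=1}^P v_i ∂_{θ_i}Φ(θ) + grad, ∂_{θ_j}Φ(θ) ⟩ = 0 for all j hold if and only if G v = −∇_θ L(θ). -/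
import Mathlib


open RealInnerProductSpace

/-- Dirac–Frenkel/Galerkin projection of the projected Sobolev gradient onto the
parameter-induced tangent space yields the natural gradient system `G v = −∇_θ L(θ)`:
(i) `⟨grad, ∂_{θ_j}Φ⟩ = ∂_{θ_j}L(θ)`, and (ii) the Galerkin orthogonality conditions
are equivalent to the natural gradient linear system. -/
theorem stmt6 {X : Type*} [NormedAddCommGroup X] [InnerProductSpace ℝ X] [CompleteSpace X]
    {P : ℕ} (E : X → ℝ) (gE : X) (B : X →L[ℝ] X)
    (hB : ∀ u v : X, ⟪B u, v⟫ = ⟪u, B v⟫)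
    (Φ : (Fin P → ℝ) → X) (θ : Fin P → ℝ) (DΦ : (Fin P → ℝ) →L[ℝ] X)
    (hΦ : HasFDerivAt Φ DΦ θ)
    (hgE : HasGradientAt E gE (Φ θ))
    (hn0 : B (Φ θ) ≠ 0)
    (htan : ∀ i : Fin P, ⟪B (Φ θ), DΦ (Pi.single i 1)⟫ = 0) :
    (∀ j : Fin P,
      ⟪gE - (⟪gE, B (Φ θ)⟫ / ‖B (Φ θ)‖ ^ 2) • B (Φ θ), DΦ (Pi.single j 1)⟫
        = fderiv ℝ (fun θ' => E (Φ θ')) θ (Pi.single j 1)) ∧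
    (∀ v : Fin P → ℝ,
      (∀ j : Fin P,
        ⟪(∑ i : Fin P, v i • DΦ (Pi.single i 1))
            + (gE - (⟪gE, B (Φ θ)⟫ / ‖B (Φ θ)‖ ^ 2) • B (Φ θ)),
          DΦ (Pi.single j 1)⟫ = 0)
      ↔ (Matrix.of fun i j : Fin P =>
            ⟪DΦ (Pi.single i 1), DΦ (Pi.single j 1)⟫).mulVec v
          = fun j : Fin P => -(fderiv ℝ (fun θ' => E (Φ θ')) θ (Pi.single j 1))) := by
  have hL : HasFDerivAt (fun θ' => E (Φ θ'))
      ((InnerProductSpace.toDual ℝ X gE : X →L[ℝ] ℝ).comp DΦ) θ :=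
    hgE.hasFDerivAt.comp θ hΦ
  have hfd : ∀ j : Fin P,
      fderiv ℝ (fun θ' => E (Φ θ')) θ (Pi.single j 1) = ⟪gE, DΦ (Pi.single j 1)⟫ := by
    intro j
    rw [hL.fderiv]
    simp [InnerProductSpace.toDual]
  have hgrad : ∀ j : Fin P,
      ⟪gE - (⟪gE, B (Φ θ)⟫ / ‖B (Φ θ)‖ ^ 2) • B (Φ θ), DΦ (Pi.single j 1)⟫
        = ⟪gE, DΦ (Pi.single j 1)⟫ := by
    intro j
    rw [inner_sub_left, real_inner_smul_left, htan j]
    ring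
  constructor
  · intro j
    rw [hfd j, hgrad j]
  · intro v
    constructor
    · intro h
      funext j
      have hj := h j
      rw [inner_add_left, hgrad j, sum_inner] at hj
      simp only [real_inner_smul_left] at hj
      simp only [Matrix.mulVec, Matrix.of_apply, dotProduct, hfd j]
      rw [show (∑ i : Fin P, ⟪DΦ (Pi.single j 1), DΦ (Pi.single i 1)⟫ * v i)
          = ∑ i : Fin P, v i * ⟪DΦ (Pi.single i 1), DΦ (Pi.single j 1)⟫ from
        Finset.sum_congr rfl fun i _ => by rw [real_inner_comm]; ring]
      linarith
    · intro h j
      have hj := congrFun h j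
      simp only [Matrix.mulVec, Matrix.of_apply, dotProduct, hfd j] at hj
      rw [inner_add_left, hgrad j, sum_inner]
      simp only [real_inner_smul_left]
      rw [show (∑ i : Fin P, v i * ⟪DΦ (Pi.single i 1), DΦ (Pi.single j 1)⟫)
          = ∑ i : Fin P, ⟪DΦ (Pi.single j 1), DΦ (Pi.single i 1)⟫ * v i from
        Finset.sum_congr rfl fun i _ => by rw [real_inner_comm]; ring, hj]
      ring
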